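/- For every n ≥ 2 and 1 ≤ m ≤ n², ψ_n(m) ≥ √m, with equality if and only if there exist integers a, b with 1 ≤ a ≤ n, 1 ≤ b ≤ n and m = ab (i.e., Z_n(m) contains a matrix of rank 1). -/

import Mathlib

open Matrix BigOperators

/-- The (unordered) singular values of a complex matrix `A`: square roots of the
eigenvalues of `Aᴴ * A`. -/
noncomputable def singVals {m n : ℕ} (A : Matrix (Fin m) (Fin n) ℂ) : Fin n → ℝ :=
  fun i => Real.sqrt ((Matrix.isHermitian_conjTranspose_mul_self A).eigenvalues i)

/-- The trace norm: sum of the singular values. -/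
noncomputable def traceNorm {m n : ℕ} (A : Matrix (Fin m) (Fin n) ℂ) : ℝ :=
  ∑ i, singVals A i

/-- The Frobenius norm. -/
noncomputable def frobNorm {m n : ℕ} (A : Matrix (Fin m) (Fin n) ℂ) : ℝ :=
  Real.sqrt (∑ i, ∑ j, ‖A i j‖ ^ 2)

/-- `sigma A k` is the `k`-th largest singular value of `A` (1-indexed), `0` if out of range. -/
noncomputable def sigma {m n : ℕ} (A : Matrix (Fin m) (Fin n) ℂ) (k : ℕ) : ℝ :=
  if h : 1 ≤ k ∧ k ≤ n then
    singVals A (Tuple.sort (singVals A) ⟨n - k, by omega⟩)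
  else 0

/-- Number of entries of `A` equal to `1`. -/
noncomputable def onesCount {a b : ℕ} (A : Matrix (Fin a) (Fin b) ℂ) : ℕ := by
  classical
  exact Finset.card (Finset.univ.filter fun p : Fin a × Fin b => A p.1 p.2 = 1)

/-- Minimum trace norm of an `n × n` (0,1)-matrix with exactly `m` ones. -/
noncomputable def psi (n m : ℕ) : ℝ :=
  sInf {x | ∃ A : Matrix (Fin n) (Fin n) ℂ, (∀ i j, A i j = 0 ∨ A i j = 1) ∧
    onesCount A = m ∧ traceNorm A = x}

/-!
The Frobenius norm of a (0,1)-matrix with `m` ones is `√m`, and the trace norm dominates it: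
`(∑ σᵢ)² ≥ ∑ σᵢ²`, with equality iff at most one singular value is nonzero, i.e. iff the rank
is at most one. Since there are finitely many (0,1)-matrices the infimum `ψ_n(m)` is
attained, so `ψ_n(m) = √m` iff some (0,1)-matrix with `m` ones has rank at most one. Such a
matrix is an outer product `u vᵀ`, so `A i j * A k l = A i l * A k j`; for a (0,1)-matrix
this forces the ones to fill a rectangle `R × C`, whence `m = |R| |C|`. Conversely the
indicator of an `a × b` rectangle has rank one.
-/

lemma sq_sum_eq_sum_sq_iff_card_ne_zero_le_one {ι : Type*} [Fintype ι] [DecidableEq ι]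
    {f : ι → ℝ} (hf : ∀ i, 0 ≤ f i) :
    (∑ i, f i) ^ 2 = ∑ i, f i ^ 2 ↔ Fintype.card {i // f i ≠ 0} ≤ 1 := by
  have hsplit :
      (∑ i, f i) ^ 2 = ∑ i, f i ^ 2 + ∑ i, ∑ j ∈ Finset.univ.erase i, f i * f j := by
    rw [sq, Finset.sum_mul, ← Finset.sum_add_distrib]
    refine Finset.sum_congr rfl fun i _ => ?_
    rw [← Finset.add_sum_erase _ _ (Finset.mem_univ i), mul_add, Finset.mul_sum, sq]
  have hoff : ∀ i, ∀ j ∈ Finset.univ.erase i, 0 ≤ f i * f j := fun i j _ =>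
    mul_nonneg (hf i) (hf j)
  rw [hsplit, add_eq_left, Finset.sum_eq_zero_iff_of_nonneg fun i _ =>
    Finset.sum_nonneg (hoff i)]
  simp only [Finset.mem_univ, forall_const, Finset.sum_eq_zero_iff_of_nonneg (hoff _),
    Finset.mem_erase, and_true, mul_eq_zero, Fintype.card_le_one_iff, Subtype.forall,
    Subtype.mk.injEq]
  grind

lemma Matrix.exists_eq_vecMulVec_of_rank_le_one {K ι κ : Type*} [Field K] [Fintype κ]
    [DecidableEq κ] {A : Matrix ι κ K} (h : A.rank ≤ 1) : ∃ u v, A = vecMulVec u v := by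
  obtain ⟨u, hu⟩ := ((Submodule.finrank_le_one_iff_isPrincipal _).mp h).principal
  have hcol : ∀ j, ∃ c : K, c • u = A.col j := fun j => by
    have hj : A.col j ∈ LinearMap.range A.mulVecLin := ⟨Pi.single j 1, mulVec_single_one A j⟩
    rwa [hu, Submodule.mem_span_singleton] at hj
  choose v hv using hcol
  refine ⟨u, v, ext fun i j => ?_⟩
  rw [vecMulVec_apply, ← col_apply A j i, ← hv j, Pi.smul_apply, smul_eq_mul, mul_comm]

section SingularValues

variable {m n : ℕ} (A : Matrix (Fin m) (Fin n) ℂ)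

lemma singVals_nonneg (i : Fin n) : 0 ≤ singVals A i := Real.sqrt_nonneg _

lemma singVals_sq (i : Fin n) :
    singVals A i ^ 2 = (isHermitian_conjTranspose_mul_self A).eigenvalues i :=
  Real.sq_sqrt (eigenvalues_conjTranspose_mul_self_nonneg A i)

lemma singVals_ne_zero_iff (i : Fin n) :
    singVals A i ≠ 0 ↔ (isHermitian_conjTranspose_mul_self A).eigenvalues i ≠ 0 :=
  Real.sqrt_ne_zero (eigenvalues_conjTranspose_mul_self_nonneg A i)

lemma trace_conjTranspose_mul_self :
    (Aᴴ * A).trace = ((∑ i, ∑ j, ‖A i j‖ ^ 2 : ℝ) : ℂ) := by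
  simp only [trace, diag_apply, mul_apply, conjTranspose_apply, RCLike.star_def,
    RCLike.conj_mul]
  push_cast
  exact Finset.sum_comm

lemma sum_singVals_sq : ∑ i, singVals A i ^ 2 = ∑ i, ∑ j, ‖A i j‖ ^ 2 := by
  have h := (isHermitian_conjTranspose_mul_self A).trace_eq_sum_eigenvalues
  rw [trace_conjTranspose_mul_self, ← RCLike.ofReal_sum] at h
  simp only [singVals_sq]
  exact RCLike.ofReal_injective (K := ℂ) h.symm

lemma frobNorm_eq_sqrt_sum_singVals_sq : frobNorm A = √(∑ i, singVals A i ^ 2) := by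
  rw [frobNorm, sum_singVals_sq]

open scoped ComplexOrder in
lemma rank_eq_card_singVals_ne_zero : A.rank = Fintype.card {i // singVals A i ≠ 0} := by
  rw [← rank_conjTranspose_mul_self,
    (isHermitian_conjTranspose_mul_self A).rank_eq_card_non_zero_eigs]
  simp only [singVals_ne_zero_iff]

end SingularValues

section TraceNorm

variable {m n : ℕ} (A : Matrix (Fin m) (Fin n) ℂ)

lemma traceNorm_nonneg : 0 ≤ traceNorm A :=
  Finset.sum_nonneg fun i _ => singVals_nonneg A i

lemma frobNorm_le_traceNorm : frobNorm A ≤ traceNorm A := by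
  rw [frobNorm_eq_sqrt_sum_singVals_sq, Real.sqrt_le_left (traceNorm_nonneg A)]
  exact Finset.sum_sq_le_sq_sum_of_nonneg fun i _ => singVals_nonneg A i

lemma traceNorm_eq_frobNorm_iff : traceNorm A = frobNorm A ↔ A.rank ≤ 1 := by
  rw [frobNorm_eq_sqrt_sum_singVals_sq, eq_comm,
    Real.sqrt_eq_iff_eq_sq (by positivity) (traceNorm_nonneg A), eq_comm, traceNorm,
    sq_sum_eq_sum_sq_iff_card_ne_zero_le_one (singVals_nonneg A),
    rank_eq_card_singVals_ne_zero]

end TraceNorm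

section ZeroOne

variable {a b : ℕ}

noncomputable def onesSet (A : Matrix (Fin a) (Fin b) ℂ) : Finset (Fin a × Fin b) := by
  classical
  exact Finset.univ.filter fun p : Fin a × Fin b => A p.1 p.2 = 1

lemma onesCount_eq_card_onesSet (A : Matrix (Fin a) (Fin b) ℂ) :
    onesCount A = (onesSet A).card := rfl

lemma mem_onesSet {A : Matrix (Fin a) (Fin b) ℂ} {p : Fin a × Fin b} :
    p ∈ onesSet A ↔ A p.1 p.2 = 1 := by
  classical
  simp [onesSet]

noncomputable def zeroOneMatrix (s : Finset (Fin a × Fin b)) : Matrix (Fin a) (Fin b) ℂ :=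
  of fun i j => if (i, j) ∈ s then 1 else 0

lemma zeroOneMatrix_apply (s : Finset (Fin a × Fin b)) (i : Fin a) (j : Fin b) :
    zeroOneMatrix s i j = if (i, j) ∈ s then 1 else 0 := rfl

lemma zeroOneMatrix_apply_eq_zero_or_one (s : Finset (Fin a × Fin b)) (i : Fin a)
    (j : Fin b) :
    zeroOneMatrix s i j = 0 ∨ zeroOneMatrix s i j = 1 := by
  rw [zeroOneMatrix_apply]
  split_ifs <;> simp

lemma onesSet_zeroOneMatrix (s : Finset (Fin a × Fin b)) : onesSet (zeroOneMatrix s) = s := by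
  ext p
  simp [mem_onesSet, zeroOneMatrix]

lemma zeroOneMatrix_onesSet {A : Matrix (Fin a) (Fin b) ℂ}
    (h01 : ∀ i j, A i j = 0 ∨ A i j = 1) :
    zeroOneMatrix (onesSet A) = A := by
  ext i j
  rcases h01 i j with h | h <;> simp [zeroOneMatrix, mem_onesSet, h]

lemma rank_zeroOneMatrix_product_le_one (R : Finset (Fin a)) (C : Finset (Fin b)) :
    (zeroOneMatrix (R ×ˢ C)).rank ≤ 1 := by
  have : zeroOneMatrix (R ×ˢ C) =
      vecMulVec (fun i => if i ∈ R then 1 else 0) (fun j => if j ∈ C then 1 else 0) := by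
    ext i j
    by_cases i ∈ R <;> by_cases j ∈ C <;> simp [zeroOneMatrix_apply, vecMulVec_apply, *]
  exact this ▸ rank_vecMulVec_le _ _

lemma sum_norm_sq_eq_onesCount {A : Matrix (Fin a) (Fin b) ℂ}
    (h01 : ∀ i j, A i j = 0 ∨ A i j = 1) : ∑ i, ∑ j, ‖A i j‖ ^ 2 = onesCount A := by
  classical
  have h : ∀ p : Fin a × Fin b, ‖A p.1 p.2‖ ^ 2 = if p ∈ onesSet A then 1 else 0 :=
    fun p => by
    rcases h01 p.1 p.2 with h | h <;> simp [mem_onesSet, h]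
  rw [← Fintype.sum_prod_type', Finset.sum_congr rfl fun p _ => h p]
  simp [onesCount_eq_card_onesSet]

lemma frobNorm_eq_sqrt_onesCount {A : Matrix (Fin a) (Fin b) ℂ}
    (h01 : ∀ i j, A i j = 0 ∨ A i j = 1) : frobNorm A = √(onesCount A) := by
  rw [frobNorm, sum_norm_sq_eq_onesCount h01]

lemma onesSet_eq_product_of_rank_le_one {A : Matrix (Fin a) (Fin b) ℂ}
    (h01 : ∀ i j, A i j = 0 ∨ A i j = 1) (hA : A.rank ≤ 1) :
    onesSet A = (onesSet A).image Prod.fst ×ˢ (onesSet A).image Prod.snd := by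
  obtain ⟨u, v, rfl⟩ := exists_eq_vecMulVec_of_rank_le_one hA
  refine subset_antisymm (fun _ hp => Finset.mem_product.mpr
    ⟨Finset.mem_image_of_mem _ hp, Finset.mem_image_of_mem _ hp⟩) ?_
  simp only [Finset.subset_iff, Finset.mem_product, Finset.mem_image, mem_onesSet]
  rintro ⟨i₀, j₀⟩ ⟨⟨⟨i, l⟩, hil, hi⟩, ⟨⟨k, j⟩, hkj, hj⟩⟩
  dsimp only at hi hj hil hkj ⊢
  subst hi hj
  have hminor : vecMulVec u v i j * vecMulVec u v k l =
      vecMulVec u v i l * vecMulVec u v k j := by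
    simp only [vecMulVec_apply]; ring
  rw [hil, hkj, one_mul] at hminor
  exact (h01 i j).resolve_left fun h0 => by simp [h0] at hminor

lemma exists_onesCount_eq_mul_of_rank_le_one {A : Matrix (Fin a) (Fin b) ℂ}
    (h01 : ∀ i j, A i j = 0 ∨ A i j = 1) (hA : A.rank ≤ 1) :
    ∃ r ≤ a, ∃ c ≤ b, onesCount A = r * c := by
  refine ⟨_, ?_, _, ?_, by rw [onesCount_eq_card_onesSet,
    onesSet_eq_product_of_rank_le_one h01 hA, Finset.card_product]⟩ <;>
  exact (Finset.card_le_univ _).trans_eq (Fintype.card_fin _)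

lemma exists_zeroOne_rank_le_one_onesCount_eq {r c : ℕ} (hr : r ≤ a) (hc : c ≤ b) :
    ∃ A : Matrix (Fin a) (Fin b) ℂ, (∀ i j, A i j = 0 ∨ A i j = 1) ∧ A.rank ≤ 1 ∧
      onesCount A = r * c := by
  obtain ⟨R, -, hR⟩ := Finset.exists_subset_card_eq (s := (Finset.univ : Finset (Fin a)))
    (by simpa using hr)
  obtain ⟨C, -, hC⟩ := Finset.exists_subset_card_eq (s := (Finset.univ : Finset (Fin b)))
    (by simpa using hc)
  refine ⟨zeroOneMatrix (R ×ˢ C), zeroOneMatrix_apply_eq_zero_or_one _,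
    rank_zeroOneMatrix_product_le_one R C, ?_⟩
  rw [onesCount_eq_card_onesSet, onesSet_zeroOneMatrix, Finset.card_product, hR, hC]

lemma traceNorm_eq_sqrt_onesCount_iff {A : Matrix (Fin a) (Fin b) ℂ}
    (h01 : ∀ i j, A i j = 0 ∨ A i j = 1) : traceNorm A = √(onesCount A) ↔ A.rank ≤ 1 := by
  rw [← frobNorm_eq_sqrt_onesCount h01, traceNorm_eq_frobNorm_iff]

lemma sqrt_onesCount_le_traceNorm {A : Matrix (Fin a) (Fin b) ℂ}
    (h01 : ∀ i j, A i j = 0 ∨ A i j = 1) : √(onesCount A) ≤ traceNorm A :=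
  frobNorm_eq_sqrt_onesCount h01 ▸ frobNorm_le_traceNorm A

end ZeroOne

section Psi

def zeroOneTraceNorms (n m : ℕ) : Set ℝ :=
  {x | ∃ A : Matrix (Fin n) (Fin n) ℂ, (∀ i j, A i j = 0 ∨ A i j = 1) ∧
    onesCount A = m ∧ traceNorm A = x}

variable {n m : ℕ}

lemma finite_zeroOneTraceNorms (n m : ℕ) : (zeroOneTraceNorms n m).Finite := by
  refine (Set.finite_range fun s : Finset (Fin n × Fin n) =>
    traceNorm (zeroOneMatrix s)).subset ?_
  rintro _ ⟨A, h01, -, rfl⟩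
  exact ⟨onesSet A, congrArg traceNorm (zeroOneMatrix_onesSet h01)⟩

lemma psi_le_traceNorm {A : Matrix (Fin n) (Fin n) ℂ} (h01 : ∀ i j, A i j = 0 ∨ A i j = 1) :
    psi n (onesCount A) ≤ traceNorm A :=
  csInf_le (finite_zeroOneTraceNorms n _).bddBelow ⟨A, h01, rfl, rfl⟩

lemma exists_traceNorm_eq_psi (hm : m ≤ n ^ 2) :
    ∃ A : Matrix (Fin n) (Fin n) ℂ, (∀ i j, A i j = 0 ∨ A i j = 1) ∧
      onesCount A = m ∧ traceNorm A = psi n m := by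
  obtain ⟨s, -, hs⟩ :=
    Finset.exists_subset_card_eq (s := (Finset.univ : Finset (Fin n × Fin n)))
      (by simpa [sq] using hm)
  have hne : (zeroOneTraceNorms n m).Nonempty := ⟨_, zeroOneMatrix s,
    zeroOneMatrix_apply_eq_zero_or_one s,
    by rw [onesCount_eq_card_onesSet, onesSet_zeroOneMatrix, hs], rfl⟩
  exact hne.csInf_mem (finite_zeroOneTraceNorms n m)

lemma sqrt_le_psi (hm : m ≤ n ^ 2) : √m ≤ psi n m := by
  obtain ⟨A, h01, rfl, hA⟩ := exists_traceNorm_eq_psi hm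
  exact hA ▸ sqrt_onesCount_le_traceNorm h01

end Psi

theorem stmt7_general (n m : ℕ) (hm1 : 1 ≤ m) (hm2 : m ≤ n ^ 2) :
    Real.sqrt m ≤ psi n m ∧
    (psi n m = Real.sqrt m ↔
      ∃ a b : ℕ, 1 ≤ a ∧ a ≤ n ∧ 1 ≤ b ∧ b ≤ n ∧ m = a * b) := by
  refine ⟨sqrt_le_psi hm2, fun hpsi => ?_, ?_⟩
  · obtain ⟨A, h01, rfl, hA⟩ := exists_traceNorm_eq_psi hm2
    obtain ⟨r, hr, c, hc, hrc⟩ := exists_onesCount_eq_mul_of_rank_le_one h01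
      ((traceNorm_eq_sqrt_onesCount_iff h01).mp (hA.trans hpsi))
    rw [hrc] at hm1 ⊢
    exact ⟨r, c, Nat.pos_of_mul_pos_right hm1, hr, Nat.pos_of_mul_pos_left hm1, hc, rfl⟩
  · rintro ⟨a, b, -, ha, -, hb, rfl⟩
    obtain ⟨A, h01, hA, hcount⟩ := exists_zeroOne_rank_le_one_onesCount_eq ha hb
    refine le_antisymm ?_ (sqrt_le_psi hm2)
    calc psi n (a * b) = psi n (onesCount A) := by rw [hcount]
      _ ≤ traceNorm A := psi_le_traceNorm h01
      _ = √(a * b : ℕ) := by rw [(traceNorm_eq_sqrt_onesCount_iff h01).mpr hA, hcount]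

/-- `ψ_n(m) ≥ √m`, with equality iff `m = a*b` with `a, b ≤ n`. -/
theorem stmt7 (n m : ℕ) (hn : 2 ≤ n) (hm1 : 1 ≤ m) (hm2 : m ≤ n ^ 2) :
    Real.sqrt m ≤ psi n m ∧
    (psi n m = Real.sqrt m ↔
      ∃ a b : ℕ, 1 ≤ a ∧ a ≤ n ∧ 1 ≤ b ∧ b ≤ n ∧ m = a * b) :=
  stmt7_general n m hm1 hm2
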